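/- Assume ψ > ψ*(0) := min_{c∈ℝ} F₀(c,1)². Suppose (c₁,c₂,s) ∈ ℝ³ satisfies the system of equations −c₁ = E_{Q∞}[(ψ^{1/2}G + A·W)·W·X^{1/2}/D], c₁² + c₂² = E_{Q∞}[(ψ^{1/2}G + A·W)²·X/D²], 1 = E_{Q∞}[(ψ^{1/2}G + A·W)²/D²], where A = ∂₁F_κ(c₁,c₂) − c₁c₂^{−1}∂₂F_κ(c₁,c₂) and D = c₂^{−1}∂₂F_κ(c₁,c₂)·X^{1/2} + ψ^{1/2}·s·X^{−1/2}, and suppose c₂ ≠ 0. Then s ≠ 0. -/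

import Mathlib

open MeasureTheory ProbabilityTheory Real Filter Set Topology

noncomputable section

namespace MaxMargin

/-- The standard Gaussian measure on `ℝ`. -/
def stdG : Measure ℝ := gaussianReal 0 1

/-- The function `F_κ(c₁,c₂) = (E[((κ − c₁·Y·G − c₂·Z)₊)²])^{1/2}` where `G, Z` are independent
standard Gaussians and, conditionally on `G`, `Y ∈ {+1,−1}` with `P(Y = +1 | G) = f(G)`. -/
def Fk (f : ℝ → ℝ) (κ c₁ c₂ : ℝ) : ℝ :=
  Real.sqrt (∫ g, ∫ z,
    (f g * (max (κ - c₁ * g - c₂ * z) 0) ^ 2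
      + (1 - f g) * (max (κ + c₁ * g - c₂ * z) 0) ^ 2) ∂stdG ∂stdG)

/-- Non-degeneracy of `f`: the variable `T = Y·G` satisfies `P(T < x) > 0` and `P(T > x) > 0`
for every `x ∈ ℝ`. -/
def NonDeg (f : ℝ → ℝ) : Prop :=
  ∀ x : ℝ,
    (0 < ∫ g, (f g * (if g < x then (1:ℝ) else 0)
          + (1 - f g) * (if -g < x then (1:ℝ) else 0)) ∂stdG) ∧
    (0 < ∫ g, (f g * (if x < g then (1:ℝ) else 0)
          + (1 - f g) * (if x < -g then (1:ℝ) else 0)) ∂stdG)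


/-- Points of `ℝ³` carrying the coordinates `(G, X, W)`. -/
abbrev Pt : Type := ℝ × ℝ × ℝ

/-- First coordinate `G`. -/
def Gc : Pt → ℝ := fun q => q.1

/-- Second coordinate `X`. -/
def Xc : Pt → ℝ := fun q => q.2.1

/-- Third coordinate `W`. -/
def Wc : Pt → ℝ := fun q => q.2.2

/-- The inner product `⟨h₁,h₂⟩_P = E_P[h₁h₂]`. -/
def ip (P : Measure Pt) (h₁ h₂ : Pt → ℝ) : ℝ := ∫ q, h₁ q * h₂ q ∂P

/-- The norm `‖h‖_P = ⟨h,h⟩_P^{1/2}`. -/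
def pnorm (P : Measure Pt) (h : Pt → ℝ) : ℝ := Real.sqrt (ip P h h)

/-- Projection onto the orthogonal complement of `W`: `Π_{W⊥}(h) = h − ⟨h,W⟩_P·W`. -/
def projW (P : Measure Pt) (h : Pt → ℝ) : Pt → ℝ := fun q => h q - ip P h Wc * Wc q

/-- Partial derivative of `F_κ` in its first argument. -/
def d1F (f : ℝ → ℝ) (κ c₁ c₂ : ℝ) : ℝ := deriv (fun t => Fk f κ t c₂) c₁

/-- Partial derivative of `F_κ` in its second argument. -/
def d2F (f : ℝ → ℝ) (κ c₁ c₂ : ℝ) : ℝ := deriv (fun t => Fk f κ c₁ t) c₂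

/-- `ψ*(0) = min_{c ∈ ℝ} F₀(c,1)²`. -/
def psiStar0 (f : ℝ → ℝ) : ℝ := ⨅ c : ℝ, (Fk f 0 c 1) ^ 2

/-- The functional `𝓡_{ψ,κ,P}(h) = ψ^{−1/2}·F_κ(⟨h, X^{1/2}W⟩_P, ‖Π_{W⊥}(X^{1/2}h)‖_P)
+ ⟨h, X^{1/2}·Π_{W⊥}(G)⟩_P`. -/
def Rfun (f : ℝ → ℝ) (P : Measure Pt) (ψ κ : ℝ) (h : Pt → ℝ) : ℝ :=
  (Real.sqrt ψ)⁻¹ *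
      Fk f κ (ip P h (fun q => Real.sqrt (Xc q) * Wc q))
        (pnorm P (projW P (fun q => Real.sqrt (Xc q) * h q)))
    + ip P h (fun q => Real.sqrt (Xc q) * projW P Gc q)

/-- `ζ(P) = ‖X^{−1/2}W‖_P^{−1}`. -/
def zetaP (P : Measure Pt) : ℝ := (pnorm P (fun q => (Real.sqrt (Xc q))⁻¹ * Wc q))⁻¹

/-- The system of equations on `Q∞ = N(0,1) ⊗ μ`, where `Π_{W⊥}(G) = G`:
with `A = ∂₁F_κ(c₁,c₂) − c₁c₂⁻¹∂₂F_κ(c₁,c₂)` and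
`D = c₂⁻¹∂₂F_κ(c₁,c₂)·X^{1/2} + ψ^{1/2}·s·X^{−1/2}`. -/
def SolSysG (f : ℝ → ℝ) (Q : Measure Pt) (ψ κ c₁ c₂ s : ℝ) : Prop :=
  (-c₁ = ∫ q, (Real.sqrt ψ * Gc q
        + (d1F f κ c₁ c₂ - c₁ * c₂⁻¹ * d2F f κ c₁ c₂) * Wc q) * Wc q * Real.sqrt (Xc q)
      / (c₂⁻¹ * d2F f κ c₁ c₂ * Real.sqrt (Xc q)
          + Real.sqrt ψ * s * (Real.sqrt (Xc q))⁻¹) ∂Q)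
  ∧ (c₁ ^ 2 + c₂ ^ 2 = ∫ q, (Real.sqrt ψ * Gc q
        + (d1F f κ c₁ c₂ - c₁ * c₂⁻¹ * d2F f κ c₁ c₂) * Wc q) ^ 2 * Xc q
      / (c₂⁻¹ * d2F f κ c₁ c₂ * Real.sqrt (Xc q)
          + Real.sqrt ψ * s * (Real.sqrt (Xc q))⁻¹) ^ 2 ∂Q)
  ∧ (1 = ∫ q, (Real.sqrt ψ * Gc q
        + (d1F f κ c₁ c₂ - c₁ * c₂⁻¹ * d2F f κ c₁ c₂) * Wc q) ^ 2
      / (c₂⁻¹ * d2F f κ c₁ c₂ * Real.sqrt (Xc q)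
          + Real.sqrt ψ * s * (Real.sqrt (Xc q))⁻¹) ^ 2 ∂Q)

/-!
If `s = 0`, the denominator `D = c₂⁻¹ ∂₂F_κ · X^{1/2}` cancels every power of `X`. As `G` is
centred, of unit variance and independent of `W`, the first equation then forces
`∂₁F_κ(c₁,c₂) = 0` and the second gives `ψ = (∂₂F_κ(c₁,c₂))²`; the third one only rules out
`D = 0`.

On the other hand, differentiating `F_κ² = E[(κ − c₁YG − c₂Z)₊²]` under the integral and using
`2mn ≤ λm² + λ⁻¹n²` shows that the derivative of `F_κ` at `(c₁,c₂)` in a direction `(u,v)` is at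
most `F₀(u,v)`. Where `∂₁F_κ = 0`, the directions `(c,±1)` and the symmetry `Z ↦ −Z` give
`|∂₂F_κ| ≤ F₀(c,1)` for every `c`, hence `ψ ≤ ψ*(0)`.
-/

theorem max_zero_sq_le_sq (t : ℝ) : max t 0 ^ 2 ≤ t ^ 2 := by
  rcases le_total t 0 with ht | ht
  · simp [max_eq_right ht, sq_nonneg]
  · rw [max_eq_left ht]

theorem hasDerivAt_max_zero_sq (y : ℝ) :
    HasDerivAt (fun x : ℝ => max x 0 ^ 2) (2 * max y 0) y := by
  rcases lt_trichotomy y 0 with hy | rfl | hy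
  · have h : (fun x : ℝ => max x 0 ^ 2) =ᶠ[𝓝 y] fun _ => 0 := by
      filter_upwards [Iio_mem_nhds hy] with x hx
      simp [max_eq_right (Set.mem_Iio.1 hx).le]
    simpa [max_eq_right hy.le] using (hasDerivAt_const y (0 : ℝ)).congr_of_eventuallyEq h
  · rw [hasDerivAt_iff_isLittleO_nhds_zero]
    simp only [zero_add, max_self, ne_eq, OfNat.ofNat_ne_zero, not_false_eq_true, zero_pow,
      sub_zero, mul_zero, smul_zero]
    refine (Asymptotics.isBigO_of_le _ fun x => ?_).trans_isLittleO
      (Asymptotics.isLittleO_pow_id one_lt_two)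
    simpa only [norm_pow, Real.norm_eq_abs, sq_abs] using max_zero_sq_le_sq x
  · have h : (fun x : ℝ => max x 0 ^ 2) =ᶠ[𝓝 y] fun x => x ^ 2 := by
      filter_upwards [Ioi_mem_nhds hy] with x hx
      rw [max_eq_left (Set.mem_Ioi.1 hx).le]
    simpa [max_eq_left hy.le, mul_comm] using (hasDerivAt_pow 2 y).congr_of_eventuallyEq h

theorem two_mul_mul_le_mul_sq_add_inv_mul_sq {m l : ℝ} (hm : 0 ≤ m) (hl : 0 < l) (d : ℝ) :
    2 * m * d ≤ l * m ^ 2 + l⁻¹ * max d 0 ^ 2 := by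
  have hd : 2 * m * d ≤ 2 * m * max d 0 := by gcongr; exact le_max_left d 0
  have hsq : 0 ≤ l⁻¹ * (l * m - max d 0) ^ 2 := by positivity
  have hexp : l⁻¹ * (l * m - max d 0) ^ 2 = l * m ^ 2 + l⁻¹ * max d 0 ^ 2 - 2 * m * max d 0 := by
    field_simp
    ring
  linarith

theorem le_two_mul_sqrt_mul_sqrt {x A B : ℝ} (hA : 0 < A) (hB : 0 < B)
    (h : ∀ l > 0, x ≤ l * A + l⁻¹ * B) : x ≤ 2 * √A * √B := by
  have hsA := Real.sqrt_pos.2 hA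
  have hsB := Real.sqrt_pos.2 hB
  convert h (√B / √A) (by positivity) using 1
  field_simp
  rw [Real.sq_sqrt hA.le, Real.sq_sqrt hB.le]
  ring

theorem norm_le_one_of_mem_Icc {x : ℝ} (hx : x ∈ Icc (0 : ℝ) 1) : ‖x‖ ≤ 1 := by
  rw [Real.norm_of_nonneg hx.1]; exact hx.2

section WeightedPosPartSq

variable {α : Type*} [MeasurableSpace α] {ν : Measure α} {w a d : α → ℝ}

theorem integrable_mul_max_zero_sq (hw : AEStronglyMeasurable w ν) (hw1 : ∀ x, ‖w x‖ ≤ 1)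
    (ha : MemLp a 2 ν) : Integrable (fun x => w x * max (a x) 0 ^ 2) ν := by
  refine ha.integrable_sq.mono
    (hw.mul ((ha.1.aemeasurable.max aemeasurable_const).pow_const 2).aestronglyMeasurable)
    (ae_of_all _ fun x => ?_)
  rw [norm_mul, Real.norm_of_nonneg (sq_nonneg _), Real.norm_of_nonneg (sq_nonneg (a x))]
  calc ‖w x‖ * max (a x) 0 ^ 2 ≤ 1 * a x ^ 2 :=
        mul_le_mul (hw1 x) (max_zero_sq_le_sq _) (sq_nonneg _) zero_le_one
    _ = a x ^ 2 := one_mul _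

theorem norm_mul_two_mul_max_zero_mul_le {w t d : ℝ} (hw : ‖w‖ ≤ 1) :
    ‖w * (2 * max t 0 * d)‖ ≤ 2 * ‖t * d‖ := by
  have ht : ‖max t 0‖ ≤ ‖t‖ := by
    rcases le_total t 0 with h | h <;> simp [h]
  rw [norm_mul, norm_mul, norm_mul, norm_mul, Real.norm_two]
  calc ‖w‖ * (2 * ‖max t 0‖ * ‖d‖) ≤ 1 * (2 * ‖t‖ * ‖d‖) := by gcongr
    _ = 2 * (‖t‖ * ‖d‖) := by ring

theorem integrable_mul_two_mul_max_zero_mul (hw : AEStronglyMeasurable w ν)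
    (hw1 : ∀ x, ‖w x‖ ≤ 1) (ha : MemLp a 2 ν) (hd : MemLp d 2 ν) :
    Integrable (fun x => w x * (2 * max (a x) 0 * d x)) ν :=
  ((ha.integrable_mul hd).norm.const_mul 2).mono
    (hw.mul ((aestronglyMeasurable_const.mul
      (ha.1.aemeasurable.max aemeasurable_const).aestronglyMeasurable).mul hd.1))
    (ae_of_all _ fun x => (norm_mul_two_mul_max_zero_mul_le (hw1 x)).trans (le_abs_self _))

theorem hasDerivAt_integral_mul_max_zero_sq (hw : AEStronglyMeasurable w ν)
    (hw1 : ∀ x, ‖w x‖ ≤ 1) (ha : MemLp a 2 ν) (hd : MemLp d 2 ν) :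
    HasDerivAt (fun t => ∫ x, w x * max (a x + t * d x) 0 ^ 2 ∂ν)
      (∫ x, w x * (2 * max (a x) 0 * d x) ∂ν) 0 := by
  have hline : ∀ t : ℝ, MemLp (fun x => a x + t * d x) 2 ν := fun t => ha.add (hd.const_mul t)
  have key := hasDerivAt_integral_of_dominated_loc_of_deriv_le (μ := ν) (x₀ := 0)
    (F := fun t x => w x * max (a x + t * d x) 0 ^ 2)
    (F' := fun t x => w x * (2 * max (a x + t * d x) 0 * d x))
    (bound := fun x => 2 * ‖a x * d x‖ + 2 * ‖d x * d x‖) (Metric.ball_mem_nhds 0 one_pos)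
    (Eventually.of_forall fun t => (integrable_mul_max_zero_sq hw hw1 (hline t)).1)
    (integrable_mul_max_zero_sq hw hw1 (hline 0))
    (integrable_mul_two_mul_max_zero_mul hw hw1 (hline 0) hd).1
    (ae_of_all _ fun x t ht => ?_)
    ((((ha.integrable_mul hd).norm.const_mul 2).add ((hd.integrable_mul hd).norm.const_mul 2)))
    (ae_of_all _ fun x t _ => ?_)
  · simpa using key.2
  · have ht1 : |t| ≤ 1 := by simpa [Real.dist_eq] using (Metric.mem_ball.1 ht).le
    refine (norm_mul_two_mul_max_zero_mul_le (hw1 x)).trans ?_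
    have : ‖(a x + t * d x) * d x‖ ≤ ‖a x * d x‖ + ‖d x * d x‖ := by
      rw [add_mul, mul_assoc]
      refine (norm_add_le _ _).trans (add_le_add le_rfl ?_)
      rw [norm_mul t]
      exact mul_le_of_le_one_left (norm_nonneg _) (by simpa using ht1)
    linarith
  · have hlin : HasDerivAt (fun t => a x + t * d x) (d x) t := by
      simpa using ((hasDerivAt_id t).mul_const (d x)).const_add (a x)
    exact ((hasDerivAt_max_zero_sq _).comp t hlin).const_mul (w x)

end WeightedPosPartSq

instance : IsProbabilityMeasure stdG := by unfold stdG; infer_instance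

instance : stdG.IsOpenPosMeasure :=
  (gaussianReal_absolutelyContinuous' 0 one_ne_zero).isOpenPosMeasure

theorem integral_id_stdG : ∫ x, x ∂stdG = 0 := integral_id_gaussianReal

theorem integral_sq_stdG : ∫ x, x ^ 2 ∂stdG = 1 := by
  have h := variance_of_integral_eq_zero (X := id) aemeasurable_id integral_id_stdG
  unfold stdG at h ⊢
  simpa [variance_id_gaussianReal] using h.symm

theorem memLp_id_stdG : MemLp id 2 stdG := memLp_id_gaussianReal 2

theorem integral_comp_neg_stdG (g : ℝ → ℝ) : ∫ x, g (-x) ∂stdG = ∫ x, g x ∂stdG := by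
  have h : MeasurePreserving (fun x : ℝ => -x) stdG stdG :=
    ⟨measurable_neg, by simpa [stdG] using gaussianReal_map_neg (μ := 0) (v := 1)⟩
  exact h.integral_comp (MeasurableEquiv.neg ℝ).measurableEmbedding g

/-- The integrand of `F_κ(c₁,c₂)²` at `(G, Z)`, after averaging over `Y`. -/
def sqHinge (f : ℝ → ℝ) (κ c₁ c₂ : ℝ) (p : ℝ × ℝ) : ℝ :=
  f p.1 * max (κ - c₁ * p.1 - c₂ * p.2) 0 ^ 2
    + (1 - f p.1) * max (κ + c₁ * p.1 - c₂ * p.2) 0 ^ 2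

/-- The derivative of `t ↦ sqHinge f κ (c₁ + t * u) (c₂ + t * v) p` at `t = 0`. -/
def sqHingeDeriv (f : ℝ → ℝ) (κ c₁ c₂ u v : ℝ) (p : ℝ × ℝ) : ℝ :=
  f p.1 * (2 * max (κ - c₁ * p.1 - c₂ * p.2) 0 * (-u * p.1 - v * p.2))
    + (1 - f p.1) * (2 * max (κ + c₁ * p.1 - c₂ * p.2) 0 * (u * p.1 - v * p.2))

section SqHinge

variable {f : ℝ → ℝ} {κ c₁ c₂ : ℝ}

theorem memLp_sub_sub_stdG (κ u v : ℝ) :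
    MemLp (fun p : ℝ × ℝ => κ - u * p.1 - v * p.2) 2 (stdG.prod stdG) :=
  ((memLp_const κ).sub ((memLp_id_stdG.comp_fst stdG).const_mul u)).sub
    ((memLp_id_stdG.comp_snd stdG).const_mul v)

theorem memLp_add_sub_stdG (κ u v : ℝ) :
    MemLp (fun p : ℝ × ℝ => κ + u * p.1 - v * p.2) 2 (stdG.prod stdG) :=
  ((memLp_const κ).add ((memLp_id_stdG.comp_fst stdG).const_mul u)).sub
    ((memLp_id_stdG.comp_snd stdG).const_mul v)

theorem sqHinge_nonneg (hf01 : ∀ x, f x ∈ Icc (0 : ℝ) 1) : 0 ≤ sqHinge f κ c₁ c₂ := fun p =>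
  add_nonneg (mul_nonneg (hf01 p.1).1 (sq_nonneg _))
    (mul_nonneg (Icc.one_sub_mem (hf01 p.1)).1 (sq_nonneg _))

theorem integrable_sqHinge (hf : Continuous f) (hf01 : ∀ x, f x ∈ Icc (0 : ℝ) 1) :
    Integrable (sqHinge f κ c₁ c₂) (stdG.prod stdG) :=
  (integrable_mul_max_zero_sq (hf.comp continuous_fst).aestronglyMeasurable
      (fun p => norm_le_one_of_mem_Icc (hf01 p.1)) (memLp_sub_sub_stdG κ c₁ c₂)).add
    (integrable_mul_max_zero_sq (continuous_const.sub (hf.comp continuous_fst)).aestronglyMeasurable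
      (fun p => norm_le_one_of_mem_Icc (Icc.one_sub_mem (hf01 p.1)))
      (memLp_add_sub_stdG κ c₁ c₂))

theorem integrable_sqHingeDeriv (hf : Continuous f) (hf01 : ∀ x, f x ∈ Icc (0 : ℝ) 1)
    (u v : ℝ) : Integrable (sqHingeDeriv f κ c₁ c₂ u v) (stdG.prod stdG) :=
  (integrable_mul_two_mul_max_zero_mul (hf.comp continuous_fst).aestronglyMeasurable
      (fun p => norm_le_one_of_mem_Icc (hf01 p.1)) (memLp_sub_sub_stdG κ c₁ c₂)
      (by simpa using memLp_sub_sub_stdG 0 u v)).add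
    (integrable_mul_two_mul_max_zero_mul
      (continuous_const.sub (hf.comp continuous_fst)).aestronglyMeasurable
      (fun p => norm_le_one_of_mem_Icc (Icc.one_sub_mem (hf01 p.1)))
      (memLp_add_sub_stdG κ c₁ c₂) (by simpa using memLp_add_sub_stdG 0 u v))

theorem Fk_eq_sqrt_integral (hf : Continuous f) (hf01 : ∀ x, f x ∈ Icc (0 : ℝ) 1) :
    Fk f κ c₁ c₂ = √(∫ p, sqHinge f κ c₁ c₂ p ∂(stdG.prod stdG)) := by
  rw [integral_prod _ (integrable_sqHinge hf hf01)]
  rfl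

theorem integral_sqHinge_pos (hf : Continuous f) (hf01 : ∀ x, f x ∈ Icc (0 : ℝ) 1)
    {p₀ : ℝ × ℝ} (hp₀ : sqHinge f κ c₁ c₂ p₀ ≠ 0) :
    0 < ∫ p, sqHinge f κ c₁ c₂ p ∂(stdG.prod stdG) := by
  have hcont : Continuous (sqHinge f κ c₁ c₂) := by unfold sqHinge; fun_prop
  rw [integral_pos_iff_support_of_nonneg (sqHinge_nonneg hf01) (integrable_sqHinge hf hf01)]
  exact hcont.isOpen_support.measure_pos _ ⟨p₀, hp₀⟩

theorem integral_sqHinge_pos_of_pos (hf : Continuous f) (hf01 : ∀ x, f x ∈ Icc (0 : ℝ) 1)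
    (hκ : 0 < κ) : 0 < ∫ p, sqHinge f κ c₁ c₂ p ∂(stdG.prod stdG) := by
  have h0 : sqHinge f κ c₁ c₂ 0 = κ ^ 2 := by simp [sqHinge, hκ.le]; ring
  exact integral_sqHinge_pos hf hf01 (p₀ := 0) (by rw [h0]; positivity)

theorem Fk_pos (hf : Continuous f) (hf01 : ∀ x, f x ∈ Icc (0 : ℝ) 1) (hκ : 0 < κ) :
    0 < Fk f κ c₁ c₂ := by
  rw [Fk_eq_sqrt_integral hf hf01]
  exact Real.sqrt_pos.2 (integral_sqHinge_pos_of_pos hf hf01 hκ)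

theorem Fk_neg_right : Fk f κ c₁ (-c₂) = Fk f κ c₁ c₂ := by
  unfold Fk
  congr 1
  refine integral_congr_ae (ae_of_all _ fun g => ?_)
  refine Eq.trans ?_ (integral_comp_neg_stdG _)
  simp only [neg_mul, mul_neg]

theorem hasDerivAt_integral_sqHinge_line (hf : Continuous f) (hf01 : ∀ x, f x ∈ Icc (0 : ℝ) 1)
    (u v : ℝ) :
    HasDerivAt (fun t => ∫ p, sqHinge f κ (c₁ + t * u) (c₂ + t * v) p ∂(stdG.prod stdG))
      (∫ p, sqHingeDeriv f κ c₁ c₂ u v p ∂(stdG.prod stdG)) 0 := by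
  have hw₁ : AEStronglyMeasurable (fun p : ℝ × ℝ => f p.1) (stdG.prod stdG) :=
    (hf.comp continuous_fst).aestronglyMeasurable
  have hw₂ : AEStronglyMeasurable (fun p : ℝ × ℝ => 1 - f p.1) (stdG.prod stdG) :=
    (continuous_const.sub (hf.comp continuous_fst)).aestronglyMeasurable
  have hb₁ : ∀ p : ℝ × ℝ, ‖f p.1‖ ≤ 1 := fun p => norm_le_one_of_mem_Icc (hf01 p.1)
  have hb₂ : ∀ p : ℝ × ℝ, ‖1 - f p.1‖ ≤ 1 :=
    fun p => norm_le_one_of_mem_Icc (Icc.one_sub_mem (hf01 p.1))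
  have ha₁ := memLp_sub_sub_stdG κ c₁ c₂
  have ha₂ := memLp_add_sub_stdG κ c₁ c₂
  have hd₁ : MemLp (fun p : ℝ × ℝ => -u * p.1 - v * p.2) 2 (stdG.prod stdG) := by
    simpa using memLp_sub_sub_stdG 0 u v
  have hd₂ : MemLp (fun p : ℝ × ℝ => u * p.1 - v * p.2) 2 (stdG.prod stdG) := by
    simpa using memLp_add_sub_stdG 0 u v
  have hsplit : (fun t => ∫ p, sqHinge f κ (c₁ + t * u) (c₂ + t * v) p ∂(stdG.prod stdG)) =
      fun t => (∫ p, f p.1 * max ((κ - c₁ * p.1 - c₂ * p.2) + t * (-u * p.1 - v * p.2)) 0 ^ 2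
          ∂(stdG.prod stdG)) +
        ∫ p, (1 - f p.1) * max ((κ + c₁ * p.1 - c₂ * p.2) + t * (u * p.1 - v * p.2)) 0 ^ 2
          ∂(stdG.prod stdG) := by
    funext t
    refine (integral_congr_ae (ae_of_all _ fun p => ?_)).trans (integral_add
      (integrable_mul_max_zero_sq hw₁ hb₁ (ha₁.add (hd₁.const_mul t)))
      (integrable_mul_max_zero_sq hw₂ hb₂ (ha₂.add (hd₂.const_mul t))))
    simp only [sqHinge]
    ring_nf
  rw [hsplit]
  exact ((hasDerivAt_integral_mul_max_zero_sq hw₁ hb₁ ha₁ hd₁).add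
    (hasDerivAt_integral_mul_max_zero_sq hw₂ hb₂ ha₂ hd₂)).congr_deriv
    (integral_add (integrable_mul_two_mul_max_zero_mul hw₁ hb₁ ha₁ hd₁)
      (integrable_mul_two_mul_max_zero_mul hw₂ hb₂ ha₂ hd₂)).symm

end SqHinge

section PartialDerivatives

variable {f : ℝ → ℝ} {κ c₁ c₂ : ℝ}

theorem hasDerivAt_Fk_line (hf : Continuous f) (hf01 : ∀ x, f x ∈ Icc (0 : ℝ) 1) (hκ : 0 < κ)
    (u v : ℝ) :
    HasDerivAt (fun t => Fk f κ (c₁ + t * u) (c₂ + t * v))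
      ((∫ p, sqHingeDeriv f κ c₁ c₂ u v p ∂(stdG.prod stdG)) / (2 * Fk f κ c₁ c₂)) 0 := by
  simp_rw [Fk_eq_sqrt_integral hf hf01]
  simpa using (hasDerivAt_integral_sqHinge_line hf hf01 (c₁ := c₁) (c₂ := c₂) u v).sqrt
    (by simpa using (integral_sqHinge_pos_of_pos hf hf01 hκ).ne')

theorem d1F_eq (hf : Continuous f) (hf01 : ∀ x, f x ∈ Icc (0 : ℝ) 1) (hκ : 0 < κ) :
    d1F f κ c₁ c₂ =
      (∫ p, sqHingeDeriv f κ c₁ c₂ 1 0 p ∂(stdG.prod stdG)) / (2 * Fk f κ c₁ c₂) := by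
  have h : (fun t => Fk f κ t c₂) = fun t => Fk f κ (c₁ + (t - c₁) * 1) (c₂ + (t - c₁) * 0) := by
    simp
  rw [d1F, h, deriv_comp_sub_const (f := fun t => Fk f κ (c₁ + t * 1) (c₂ + t * 0)), sub_self,
    (hasDerivAt_Fk_line hf hf01 hκ 1 0).deriv]

theorem d2F_eq (hf : Continuous f) (hf01 : ∀ x, f x ∈ Icc (0 : ℝ) 1) (hκ : 0 < κ) :
    d2F f κ c₁ c₂ =
      (∫ p, sqHingeDeriv f κ c₁ c₂ 0 1 p ∂(stdG.prod stdG)) / (2 * Fk f κ c₁ c₂) := by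
  have h : (fun t => Fk f κ c₁ t) = fun t => Fk f κ (c₁ + (t - c₂) * 0) (c₂ + (t - c₂) * 1) := by
    simp
  rw [d2F, h, deriv_comp_sub_const (f := fun t => Fk f κ (c₁ + t * 0) (c₂ + t * 1)), sub_self,
    (hasDerivAt_Fk_line hf hf01 hκ 0 1).deriv]

theorem integral_sqHingeDeriv (hf : Continuous f) (hf01 : ∀ x, f x ∈ Icc (0 : ℝ) 1) (u v : ℝ) :
    ∫ p, sqHingeDeriv f κ c₁ c₂ u v p ∂(stdG.prod stdG) =
      u * (∫ p, sqHingeDeriv f κ c₁ c₂ 1 0 p ∂(stdG.prod stdG))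
        + v * ∫ p, sqHingeDeriv f κ c₁ c₂ 0 1 p ∂(stdG.prod stdG) := by
  rw [← integral_const_mul, ← integral_const_mul, ← integral_add
    ((integrable_sqHingeDeriv hf hf01 1 0).const_mul u)
    ((integrable_sqHingeDeriv hf hf01 0 1).const_mul v)]
  congr 1
  funext p
  simp only [sqHingeDeriv]
  ring

theorem sqHingeDeriv_le {l : ℝ} (hf01 : ∀ x, f x ∈ Icc (0 : ℝ) 1) (hl : 0 < l) (u v : ℝ)
    (p : ℝ × ℝ) :
    sqHingeDeriv f κ c₁ c₂ u v p ≤ l * sqHinge f κ c₁ c₂ p + l⁻¹ * sqHinge f 0 u v p := by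
  have hw₁ := (hf01 p.1).1
  have hw₂ := (Icc.one_sub_mem (hf01 p.1)).1
  calc sqHingeDeriv f κ c₁ c₂ u v p
      ≤ f p.1 * (l * max (κ - c₁ * p.1 - c₂ * p.2) 0 ^ 2 + l⁻¹ * max (-u * p.1 - v * p.2) 0 ^ 2)
        + (1 - f p.1) * (l * max (κ + c₁ * p.1 - c₂ * p.2) 0 ^ 2
          + l⁻¹ * max (u * p.1 - v * p.2) 0 ^ 2) := by
        unfold sqHingeDeriv
        gcongr <;> exact two_mul_mul_le_mul_sq_add_inv_mul_sq (le_max_right _ _) hl _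
    _ = l * sqHinge f κ c₁ c₂ p + l⁻¹ * sqHinge f 0 u v p := by
        simp only [sqHinge, zero_sub, zero_add, neg_mul]
        ring

theorem integral_sqHingeDeriv_le (hf : Continuous f) (hf01 : ∀ x, f x ∈ Icc (0 : ℝ) 1)
    (hκ : 0 < κ) (u : ℝ) {v : ℝ} (hv : v ≠ 0) :
    ∫ p, sqHingeDeriv f κ c₁ c₂ u v p ∂(stdG.prod stdG) ≤ 2 * Fk f κ c₁ c₂ * Fk f 0 u v := by
  have hJ := integral_sqHinge_pos_of_pos hf hf01 hκ (c₁ := c₁) (c₂ := c₂)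
  have hJ₀ : 0 < ∫ p, sqHinge f 0 u v p ∂(stdG.prod stdG) :=
    integral_sqHinge_pos hf hf01 (p₀ := (0, -v)) (by
      rw [show sqHinge f 0 u v (0, -v) = v ^ 4 by simp [sqHinge, mul_self_nonneg]; ring]
      positivity)
  rw [Fk_eq_sqrt_integral hf hf01, Fk_eq_sqrt_integral hf hf01]
  refine le_two_mul_sqrt_mul_sqrt hJ hJ₀ fun l hl => ?_
  rw [← integral_const_mul, ← integral_const_mul, ← integral_add
    ((integrable_sqHinge hf hf01).const_mul l) ((integrable_sqHinge hf hf01).const_mul l⁻¹)]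
  exact integral_mono (integrable_sqHingeDeriv hf hf01 u v)
    (((integrable_sqHinge hf hf01).const_mul l).add ((integrable_sqHinge hf hf01).const_mul l⁻¹))
    (sqHingeDeriv_le hf01 hl u v)

theorem sq_d2F_le_sq_Fk_zero (hf : Continuous f) (hf01 : ∀ x, f x ∈ Icc (0 : ℝ) 1) (hκ : 0 < κ)
    (hd1 : d1F f κ c₁ c₂ = 0) (c : ℝ) : d2F f κ c₁ c₂ ^ 2 ≤ Fk f 0 c 1 ^ 2 := by
  have hF := Fk_pos hf hf01 hκ (c₁ := c₁) (c₂ := c₂)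
  have h10 : ∫ p, sqHingeDeriv f κ c₁ c₂ 1 0 p ∂(stdG.prod stdG) = 0 := by
    simpa [d1F_eq hf hf01 hκ, hF.ne'] using hd1
  have h01 : ∫ p, sqHingeDeriv f κ c₁ c₂ 0 1 p ∂(stdG.prod stdG) =
      2 * Fk f κ c₁ c₂ * d2F f κ c₁ c₂ := by
    rw [d2F_eq hf hf01 hκ]; field_simp
  have hup := integral_sqHingeDeriv_le hf hf01 hκ (c₁ := c₁) (c₂ := c₂) c one_ne_zero
  have hlo := integral_sqHingeDeriv_le hf hf01 hκ (c₁ := c₁) (c₂ := c₂) c (neg_ne_zero.2 one_ne_zero)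
  rw [integral_sqHingeDeriv hf hf01, h10, h01] at hup hlo
  rw [Fk_neg_right] at hlo
  refine sq_le_sq' ?_ ?_ <;> nlinarith

theorem sq_d2F_le_psiStar0 (hf : Continuous f) (hf01 : ∀ x, f x ∈ Icc (0 : ℝ) 1) (hκ : 0 < κ)
    (hd1 : d1F f κ c₁ c₂ = 0) : d2F f κ c₁ c₂ ^ 2 ≤ psiStar0 f :=
  le_ciInf (sq_d2F_le_sq_Fk_zero hf hf01 hκ hd1)

end PartialDerivatives

theorem psiStar0_nonneg (f : ℝ → ℝ) : 0 ≤ psiStar0 f := le_ciInf fun _ => sq_nonneg _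

section GaussianProd

variable {β : Type*} [MeasurableSpace β] {μ : Measure β} [IsProbabilityMeasure μ] {W : β → ℝ}

theorem integral_gaussian_prod_mul (hW : MemLp W 2 μ) (a b : ℝ) :
    ∫ q, (a * q.1 + b * W q.2) * W q.2 ∂(stdG.prod μ) = b * ∫ y, W y ^ 2 ∂μ := by
  have hGW : Integrable (fun q : ℝ × β => q.1 * W q.2) (stdG.prod μ) :=
    (memLp_id_stdG.comp_fst μ).integrable_mul (hW.comp_snd stdG)
  have hWW : Integrable (fun q : ℝ × β => W q.2 ^ 2) (stdG.prod μ) :=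
    (hW.comp_snd stdG).integrable_sq
  calc ∫ q, (a * q.1 + b * W q.2) * W q.2 ∂(stdG.prod μ)
      = ∫ q, (a * (q.1 * W q.2) + b * W q.2 ^ 2) ∂(stdG.prod μ) := by
        congr 1; funext q; ring
    _ = b * ∫ y, W y ^ 2 ∂μ := by
        rw [integral_add (hGW.const_mul a) (hWW.const_mul b), integral_const_mul,
          integral_const_mul, integral_prod_mul (fun x => x) W, integral_id_stdG,
          integral_fun_snd (fun y => W y ^ 2)]
        simp

theorem integral_gaussian_prod_sq (hW : MemLp W 2 μ) (a b : ℝ) :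
    ∫ q, (a * q.1 + b * W q.2) ^ 2 ∂(stdG.prod μ) = a ^ 2 + b ^ 2 * ∫ y, W y ^ 2 ∂μ := by
  have hGG : Integrable (fun q : ℝ × β => q.1 ^ 2) (stdG.prod μ) :=
    (memLp_id_stdG.comp_fst μ).integrable_sq
  have hGW : Integrable (fun q : ℝ × β => q.1 * W q.2) (stdG.prod μ) :=
    (memLp_id_stdG.comp_fst μ).integrable_mul (hW.comp_snd stdG)
  have hWW : Integrable (fun q : ℝ × β => W q.2 ^ 2) (stdG.prod μ) :=
    (hW.comp_snd stdG).integrable_sq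
  calc ∫ q, (a * q.1 + b * W q.2) ^ 2 ∂(stdG.prod μ)
      = ∫ q, (a ^ 2 * q.1 ^ 2 + 2 * a * b * (q.1 * W q.2) + b ^ 2 * W q.2 ^ 2) ∂(stdG.prod μ) := by
        congr 1; funext q; ring
    _ = a ^ 2 + b ^ 2 * ∫ y, W y ^ 2 ∂μ := by
        have h12 : Integrable (fun q : ℝ × β => a ^ 2 * q.1 ^ 2 + 2 * a * b * (q.1 * W q.2))
            (stdG.prod μ) := (hGG.const_mul _).add (hGW.const_mul _)
        rw [integral_add h12 (hWW.const_mul _),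
          integral_add (hGG.const_mul _) (hGW.const_mul _), integral_const_mul,
          integral_const_mul, integral_const_mul, integral_prod_mul (fun x => x) W,
          integral_id_stdG, integral_fun_fst (fun x => x ^ 2), integral_sq_stdG,
          integral_fun_snd (fun y => W y ^ 2)]
        simp

end GaussianProd

theorem SolSysG.d1F_eq_zero_and_eq_sq_d2F {f : ℝ → ℝ} {μ : Measure (ℝ × ℝ)}
    [IsProbabilityMeasure μ] {xmin xmax ψ κ c₁ c₂ : ℝ} (hxmin : 0 < xmin)
    (hsupp : ∀ᵐ q ∂μ, q.1 ∈ Icc xmin xmax) (hw2 : ∫ q, q.2 ^ 2 ∂μ = 1) (hψ : 0 ≤ ψ)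
    (hsol : SolSysG f (stdG.prod μ) ψ κ c₁ c₂ 0) :
    d1F f κ c₁ c₂ = 0 ∧ ψ = d2F f κ c₁ c₂ ^ 2 := by
  obtain ⟨e1, e2, e3⟩ := hsol
  set a := d1F f κ c₁ c₂
  set b := d2F f κ c₁ c₂
  set A := a - c₁ * c₂⁻¹ * b
  set k := c₂⁻¹ * b with hk
  simp only [mul_zero, zero_mul, add_zero] at e1 e2 e3
  have hk0 : k ≠ 0 := by
    rintro hk0
    simp [hk0] at e3
  have hc₂ : c₂ ≠ 0 := by rintro rfl; simp [hk] at hk0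
  have hX : ∀ᵐ q ∂(stdG.prod μ), 0 < Xc q :=
    (Measure.quasiMeasurePreserving_snd.ae hsupp).mono fun q hq => hxmin.trans_le hq.1
  have hW : MemLp Prod.snd 2 μ :=
    (memLp_two_iff_integrable_sq measurable_snd.aestronglyMeasurable).2
      (Integrable.of_integral_ne_zero (by rw [hw2]; exact one_ne_zero))
  have h1 : -c₁ = k⁻¹ * A := by
    rw [e1, integral_congr_ae (g := fun q => k⁻¹ * ((√ψ * q.1 + A * q.2.2) * q.2.2)) ?_,
      integral_const_mul, integral_gaussian_prod_mul hW, hw2, mul_one]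
    filter_upwards [hX] with q hq
    have : √(Xc q) ≠ 0 := (Real.sqrt_pos.2 hq).ne'
    simp only [Gc, Wc] at this ⊢
    field_simp
  have h2 : c₁ ^ 2 + c₂ ^ 2 = (k ^ 2)⁻¹ * (ψ + A ^ 2) := by
    rw [e2, integral_congr_ae (g := fun q => (k ^ 2)⁻¹ * (√ψ * q.1 + A * q.2.2) ^ 2) ?_,
      integral_const_mul, integral_gaussian_prod_sq hW, hw2, mul_one, Real.sq_sqrt hψ]
    filter_upwards [hX] with q hq
    simp only [Gc, Wc]
    rw [mul_pow, Real.sq_sqrt hq.le]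
    field_simp
  have hA : A = -c₁ * k := by rw [h1]; field_simp
  have ha : a = 0 := by
    have : A = a - c₁ * k := by simp only [A, hk]; ring
    linarith
  refine ⟨ha, ?_⟩
  rw [hA] at h2
  field_simp at h2
  rw [hk] at h2
  field_simp at h2
  exact mul_left_cancel₀ (pow_ne_zero 2 hc₂) (by linarith)

theorem statement_6_general (f : ℝ → ℝ) (hf : Continuous f) (hf01 : ∀ x, f x ∈ Set.Icc (0:ℝ) 1)
    (ρ : ℝ)
    (μ : Measure (ℝ × ℝ)) [IsProbabilityMeasure μ]
    (xmin xmax : ℝ) (hxmin : 0 < xmin)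
    (hsupp : ∀ᵐ q ∂μ, q.1 ∈ Set.Icc xmin xmax)
    (hw2 : ∫ q, q.2 ^ 2 ∂μ = 1)
    (κ : ℝ) (hκ : 0 < κ)
    (ψ : ℝ) (hψ : psiStar0 (fun x => f (ρ * x)) < ψ)
    (c₁ c₂ s : ℝ)
    (hsol : SolSysG (fun x => f (ρ * x)) (stdG.prod μ) ψ κ c₁ c₂ s) :
    s ≠ 0 := by
  rintro rfl
  obtain ⟨hd1, hψb⟩ := hsol.d1F_eq_zero_and_eq_sq_d2F hxmin hsupp hw2
    ((psiStar0_nonneg _).trans hψ.le)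
  have hle := sq_d2F_le_psiStar0 (by fun_prop) (fun x => hf01 (ρ * x)) hκ hd1
  linarith

/-- If `ψ > ψ*(0)` and `(c₁,c₂,s)` solves the system on `Q∞ = N(0,1) ⊗ μ` with `c₂ ≠ 0`,
then `s ≠ 0`. -/
theorem statement_6 (f : ℝ → ℝ) (hf : Continuous f) (hf01 : ∀ x, f x ∈ Set.Icc (0:ℝ) 1)
    (ρ : ℝ) (hρ : 0 < ρ) (hnd : NonDeg (fun x => f (ρ * x)))
    (μ : Measure (ℝ × ℝ)) [IsProbabilityMeasure μ]
    (xmin xmax : ℝ) (hxmin : 0 < xmin) (hxx : xmin ≤ xmax)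
    (hsupp : ∀ᵐ q ∂μ, q.1 ∈ Set.Icc xmin xmax)
    (hw2 : ∫ q, q.2 ^ 2 ∂μ = 1)
    (κ : ℝ) (hκ : 0 < κ)
    (ψ : ℝ) (hψ : psiStar0 (fun x => f (ρ * x)) < ψ)
    (c₁ c₂ s : ℝ)
    (hsol : SolSysG (fun x => f (ρ * x)) (stdG.prod μ) ψ κ c₁ c₂ s)
    (hc₂ : c₂ ≠ 0) :
    s ≠ 0 :=
  statement_6_general f hf hf01 ρ μ xmin xmax hxmin hsupp hw2 κ hκ ψ hψ c₁ c₂ s hsol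

end MaxMargin
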